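/- Pointwise heat-kernel representation: for every f : {−1,1}ⁿ → ℝ and every x ∈ {−1,1}ⁿ, f(x) − E f(ε) = ∫₀^∞ (e^{2t}−1)^{−1/2} E[ Σⱼ δ_j(t) D_j f(x·ξ(t)) ] dt, where x·ξ(t) denotes coordinatewise product. -/

import Mathlib

open Real MeasureTheory Finset

noncomputable section

/-- Sign of a boolean: `true ↦ 1`, `false ↦ -1`. -/
def sgn (b : Bool) : ℝ := if b then 1 else -1

/-- Flip the `j`-th coordinate of a point of the discrete cube `{-1,1}ⁿ`. -/
def flip' {n : ℕ} (j : Fin n) (x : Fin n → Bool) : Fin n → Bool :=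
  Function.update x j (!(x j))

/-- Discrete partial derivative `D_j f(ε) = (f(ε) - f(ε^{(j)}))/2`. -/
def D {n : ℕ} (j : Fin n) (f : (Fin n → Bool) → ℝ) : (Fin n → Bool) → ℝ :=
  fun x => (f x - f (flip' j x)) / 2

/-- `D_j` as a linear map. -/
def DL (n : ℕ) (j : Fin n) : ((Fin n → Bool) → ℝ) →ₗ[ℝ] ((Fin n → Bool) → ℝ) where
  toFun := D j
  map_add' f g := by funext x; simp [D]; ring
  map_smul' c f := by funext x; simp [D]; ring

/-- The discrete Laplacian `Δ = -∑ⱼ Dⱼ` as a continuous linear map. -/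
def Lap (n : ℕ) : ((Fin n → Bool) → ℝ) →L[ℝ] ((Fin n → Bool) → ℝ) :=
  LinearMap.toContinuousLinearMap (-(∑ j : Fin n, DL n j))

/-- The heat semigroup `P_t = e^{tΔ}` on the discrete cube. -/
def P (n : ℕ) (t : ℝ) : ((Fin n → Bool) → ℝ) →L[ℝ] ((Fin n → Bool) → ℝ) :=
  NormedSpace.exp (t • Lap n)

/-- The weight of the biased product measure: probability of `ξ(t) = ξ`. -/
def w (n : ℕ) (t : ℝ) (ξ : Fin n → Bool) : ℝ :=
  ∏ i : Fin n, (1 + Real.exp (-t) * sgn (ξ i)) / 2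

/-- The standardized variable `δ_j(t) = (ξ_j(t) - e^{-t})/√(1-e^{-2t})`. -/
def del (t : ℝ) (b : Bool) : ℝ := (sgn b - Real.exp (-t)) / Real.sqrt (1 - Real.exp (-2 * t))

/-- Coordinatewise product of two points of the cube. -/
def cmul {n : ℕ} (x ξ : Fin n → Bool) : Fin n → Bool := fun i => x i == ξ i

/-!
Put `g = f(x · _)` and `F(t) = E g(ξ(t))`, so that `F(0) = f(x)`, `F(∞) = E f` and
`f(x) - E f = -∫₀^∞ F'`. Differentiating the product weight one coordinate at a time,
`-F'(t) = e^{-t}/2 · Σⱼ Σ_ξ sgn(ξⱼ) wⱼ(ξ) g(ξ)`, where `wⱼ` is the weight of the other coordinates.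
On the other side `P(ξⱼ(t) = b) δⱼ(b) = sgn(b) √(1 - e^{-2t}) / 2`, and since `sgn(ξⱼ) wⱼ(ξ)` is
odd under flipping coordinate `j`, summation by parts turns `Dⱼ g` into `g`; the prefactor
`√(1 - e^{-2t}) / √(e^{2t} - 1) = e^{-t}` then matches the two sides.
-/

open Filter Topology

lemma sgn_not (b : Bool) : sgn (!b) = -sgn b := by cases b <;> simp [sgn]

lemma abs_sgn (b : Bool) : |sgn b| = 1 := by cases b <;> simp [sgn]

section Cube

variable {n : ℕ}

lemma flip'_apply_self (j : Fin n) (ξ : Fin n → Bool) : flip' j ξ j = !ξ j :=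
  Function.update_self _ _ _

lemma flip'_apply_of_ne {i j : Fin n} (h : i ≠ j) (ξ : Fin n → Bool) : flip' j ξ i = ξ i :=
  Function.update_of_ne h _ _

lemma flip'_involutive (j : Fin n) : Function.Involutive (flip' j) := by
  intro ξ
  funext i
  rcases eq_or_ne i j with rfl | hi
  · simp [flip'_apply_self]
  · simp [flip'_apply_of_ne hi]

lemma cmul_flip' (j : Fin n) (x ξ : Fin n → Bool) :
    cmul x (flip' j ξ) = flip' j (cmul x ξ) := by
  funext i
  rcases eq_or_ne i j with rfl | hi
  · simp only [cmul, flip'_apply_self]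
    cases x i <;> cases ξ i <;> rfl
  · simp [cmul, flip'_apply_of_ne hi]

lemma cmul_involutive (x : Fin n → Bool) : Function.Involutive (cmul x) := by
  intro ξ
  funext i
  simp only [cmul]
  cases x i <;> cases ξ i <;> rfl

lemma cmul_true (x : Fin n → Bool) : cmul x (fun _ => true) = x := by
  funext i
  simp [cmul]

lemma D_apply_cmul (j : Fin n) (f : (Fin n → Bool) → ℝ) (x ξ : Fin n → Bool) :
    D j f (cmul x ξ) = D j (f ∘ cmul x) ξ := by
  simp only [D, Function.comp_apply, cmul_flip']

/-- `D j` is half of `id - flip' j`, and `flip' j` is a bijection that negates `h`. -/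
lemma sum_mul_D_of_flip'_eq_neg (j : Fin n) {h : (Fin n → Bool) → ℝ}
    (hh : ∀ ξ, h (flip' j ξ) = -h ξ) (g : (Fin n → Bool) → ℝ) :
    ∑ ξ, h ξ * D j g ξ = ∑ ξ, h ξ * g ξ := by
  have hflip : ∑ ξ, h ξ * g (flip' j ξ) = -∑ ξ, h ξ * g ξ := by
    rw [← Equiv.sum_comp ((flip'_involutive j).toPerm _)]
    simp [hh, flip'_involutive j _]
  simp only [D, mul_div_assoc', mul_sub, ← Finset.sum_div, Finset.sum_sub_distrib, hflip]
  ring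

end Cube

/-- The law of a coordinate of `ξ(t)`: `P(ξ_j(t) = b)`. -/
def bias (t : ℝ) (b : Bool) : ℝ := (1 + exp (-t) * sgn b) / 2

/-- The law of the coordinates of `ξ(t)` other than the `j`-th. -/
def wExcept (n : ℕ) (j : Fin n) (t : ℝ) (ξ : Fin n → Bool) : ℝ :=
  ∏ i ∈ univ.erase j, bias t (ξ i)

lemma bias_zero (b : Bool) : bias 0 b = if b then 1 else 0 := by
  cases b <;> norm_num [bias, sgn]

lemma bias_nonneg {t : ℝ} (ht : 0 ≤ t) (b : Bool) : 0 ≤ bias t b := by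
  have : exp (-t) ≤ 1 := exp_le_one_iff.mpr (by linarith)
  cases b <;> simp [bias, sgn] <;> linarith [exp_pos (-t)]

lemma bias_le_one {t : ℝ} (ht : 0 ≤ t) (b : Bool) : bias t b ≤ 1 := by
  have : exp (-t) ≤ 1 := exp_le_one_iff.mpr (by linarith)
  cases b <;> simp [bias, sgn] <;> linarith [exp_pos (-t)]

lemma hasDerivAt_bias (b : Bool) (t : ℝ) :
    HasDerivAt (fun t => bias t b) (-(exp (-t) * sgn b / 2)) t := by
  have hexp : HasDerivAt (fun t : ℝ => exp (-t)) (-exp (-t)) t := by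
    simpa using (hasDerivAt_neg t).exp
  exact (((hexp.mul_const (sgn b)).const_add 1).div_const 2).congr_deriv (by ring)

lemma tendsto_bias_atTop (b : Bool) : Tendsto (fun t => bias t b) atTop (𝓝 (1 / 2)) := by
  unfold bias
  simpa using ((tendsto_exp_neg_atTop_nhds_zero.mul_const (sgn b)).const_add 1).div_const 2

lemma bias_mul_del {t : ℝ} (ht : 0 < t) (b : Bool) :
    bias t b * del t b = sgn b * √(1 - exp (-2 * t)) / 2 := by
  have hpos : 0 < 1 - exp (-2 * t) := sub_pos.mpr (exp_lt_one_iff.mpr (by linarith))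
  have hr : √(1 - exp (-2 * t)) ^ 2 = 1 - exp (-t) ^ 2 := by
    rw [sq_sqrt hpos.le, ← exp_nat_mul]
    ring_nf
  have hs : sgn b ^ 2 = 1 := by cases b <;> simp [sgn]
  have hne : √(1 - exp (-2 * t)) ≠ 0 := (sqrt_pos.mpr hpos).ne'
  rw [bias, del]
  generalize √(1 - exp (-2 * t)) = r at *
  field_simp
  linear_combination exp (-t) * hs - sgn b * hr

lemma inv_sqrt_exp_sub_one_mul_sqrt {t : ℝ} (ht : 0 < t) :
    (√(exp (2 * t) - 1))⁻¹ * √(1 - exp (-2 * t)) = exp (-t) := by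
  have hpos : 0 < √(exp (2 * t) - 1) :=
    sqrt_pos.mpr (sub_pos.mpr (one_lt_exp_iff.mpr (by linarith)))
  have hfac : 1 - exp (-2 * t) = exp (-t) * exp (-t) * (exp (2 * t) - 1) := by
    rw [mul_sub, mul_one, ← exp_add, ← exp_add]
    ring_nf
    rw [exp_zero]
    ring
  rw [hfac, sqrt_mul (mul_self_nonneg _), sqrt_mul_self (exp_pos _).le]
  field_simp

section HeatFlow

variable {n : ℕ}

lemma w_eq_prod_bias (t : ℝ) (ξ : Fin n → Bool) : w n t ξ = ∏ i, bias t (ξ i) := rfl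

lemma w_eq_bias_mul_wExcept (j : Fin n) (t : ℝ) (ξ : Fin n → Bool) :
    w n t ξ = bias t (ξ j) * wExcept n j t ξ :=
  (mul_prod_erase univ (fun i => bias t (ξ i)) (mem_univ j)).symm

lemma wExcept_flip' (j : Fin n) (t : ℝ) (ξ : Fin n → Bool) :
    wExcept n j t (flip' j ξ) = wExcept n j t ξ :=
  prod_congr rfl fun _ hi => by rw [flip'_apply_of_ne (ne_of_mem_erase hi)]

lemma abs_sgn_mul_wExcept_le {t : ℝ} (ht : 0 ≤ t) (j : Fin n) (ξ : Fin n → Bool) :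
    |sgn (ξ j) * wExcept n j t ξ| ≤ 1 := by
  unfold wExcept
  rw [abs_mul, abs_sgn, one_mul, abs_of_nonneg (prod_nonneg fun i _ => bias_nonneg ht _)]
  exact prod_le_one (fun i _ => bias_nonneg ht _) (fun i _ => bias_le_one ht _)

/-- `E g(ξ(t))`, that is `P_t g` at the all-`true` point. -/
def heatFlow (n : ℕ) (g : (Fin n → Bool) → ℝ) (t : ℝ) : ℝ := ∑ ξ, w n t ξ * g ξ

def heatFlowDeriv (n : ℕ) (g : (Fin n → Bool) → ℝ) (t : ℝ) : ℝ :=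
  -((∑ j, ∑ ξ, sgn (ξ j) * wExcept n j t ξ * g ξ) / 2 * exp (-t))

lemma hasDerivAt_heatFlow (g : (Fin n → Bool) → ℝ) (t : ℝ) :
    HasDerivAt (heatFlow n g) (heatFlowDeriv n g t) t := by
  have hw : ∀ ξ : Fin n → Bool, HasDerivAt (fun t => w n t ξ)
      (∑ j, wExcept n j t ξ • -(exp (-t) * sgn (ξ j) / 2)) t := fun ξ =>
    HasDerivAt.fun_finsetProd fun i _ => hasDerivAt_bias (ξ i) t
  refine (HasDerivAt.fun_sum (u := univ) fun ξ _ => (hw ξ).mul_const (g ξ)).congr_deriv ?_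
  simp only [heatFlowDeriv, smul_eq_mul, sum_mul, sum_div, ← sum_neg_distrib]
  rw [sum_comm]
  exact sum_congr rfl fun ξ _ => sum_congr rfl fun j _ => by ring

lemma heatFlow_zero (g : (Fin n → Bool) → ℝ) : heatFlow n g 0 = g fun _ => true := by
  rw [heatFlow, Fintype.sum_eq_single (fun _ => true)]
  · simp [w_eq_prod_bias, bias_zero]
  · intro ξ hξ
    obtain ⟨i, hi⟩ : ∃ i, ξ i = false := by
      by_contra! h
      exact hξ (funext fun i => by simpa using h i)
    rw [w_eq_prod_bias, prod_eq_zero (mem_univ i) (by simp [hi, bias_zero]), zero_mul]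

lemma tendsto_heatFlow_atTop (g : (Fin n → Bool) → ℝ) :
    Tendsto (heatFlow n g) atTop (𝓝 ((∑ ξ, g ξ) / 2 ^ n)) := by
  have hw : ∀ ξ : Fin n → Bool, Tendsto (fun t => w n t ξ) atTop (𝓝 ((1 / 2) ^ n)) := fun ξ => by
    simpa [w_eq_prod_bias] using tendsto_finsetProd univ fun i _ => tendsto_bias_atTop (ξ i)
  unfold heatFlow
  convert tendsto_finsetSum univ fun ξ _ => (hw ξ).mul_const (g ξ) using 2
  rw [← mul_sum, one_div, inv_pow, inv_mul_eq_div]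

lemma integrableOn_heatFlowDeriv (g : (Fin n → Bool) → ℝ) :
    IntegrableOn (heatFlowDeriv n g) (Set.Ioi 0) := by
  have hexp : IntegrableOn (fun t => exp (-t)) (Set.Ioi 0) := by
    simpa using exp_neg_integrableOn_Ioi 0 one_pos
  have hcont : Continuous fun t => (∑ j, ∑ ξ, sgn (ξ j) * wExcept n j t ξ * g ξ) / 2 := by
    unfold wExcept bias
    fun_prop
  refine (hexp.bdd_mul (c := ∑ j : Fin n, ∑ ξ, |g ξ|) hcont.aestronglyMeasurable ?_).neg
  filter_upwards [ae_restrict_mem measurableSet_Ioi] with t (ht : 0 < t)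
  rw [norm_eq_abs, abs_div, abs_two]
  refine (half_le_self (abs_nonneg _)).trans <| (abs_sum_le_sum_abs _ _).trans <|
    sum_le_sum fun j _ => (abs_sum_le_sum_abs _ _).trans <| sum_le_sum fun ξ _ => ?_
  rw [abs_mul]
  exact mul_le_of_le_one_left (abs_nonneg _) (abs_sgn_mul_wExcept_le ht.le j ξ)

lemma integrand_eq_neg_heatFlowDeriv {t : ℝ} (ht : 0 < t) (g : (Fin n → Bool) → ℝ) :
    (√(exp (2 * t) - 1))⁻¹ * ∑ ξ, w n t ξ * ∑ j, del t (ξ j) * D j g ξ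
      = -heatFlowDeriv n g t := by
  have hdel : ∀ j ξ, w n t ξ * (del t (ξ j) * D j g ξ)
      = √(1 - exp (-2 * t)) / 2 * (sgn (ξ j) * wExcept n j t ξ * D j g ξ) := fun j ξ => by
    rw [w_eq_bias_mul_wExcept j]
    linear_combination (wExcept n j t ξ * D j g ξ) * bias_mul_del ht (ξ j)
  have hD : ∀ j, ∑ ξ, sgn (ξ j) * wExcept n j t ξ * D j g ξ
      = ∑ ξ, sgn (ξ j) * wExcept n j t ξ * g ξ := fun j =>
    sum_mul_D_of_flip'_eq_neg j (fun ξ => by rw [flip'_apply_self, sgn_not, wExcept_flip', neg_mul]) g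
  rw [heatFlowDeriv, neg_neg, ← inv_sqrt_exp_sub_one_mul_sqrt ht]
  simp_rw [mul_sum, hdel]
  rw [sum_comm]
  simp_rw [← mul_sum, hD]
  ring

theorem heatFlow_representation (g : (Fin n → Bool) → ℝ) :
    g (fun _ => true) - (∑ ε, g ε) / 2 ^ n =
      ∫ t in Set.Ioi 0, (√(exp (2 * t) - 1))⁻¹ * ∑ ξ, w n t ξ * ∑ j, del t (ξ j) * D j g ξ := by
  rw [setIntegral_congr_fun measurableSet_Ioi fun t ht => integrand_eq_neg_heatFlowDeriv ht g,
    integral_neg, integral_Ioi_of_hasDerivAt_of_tendsto' (fun t _ => hasDerivAt_heatFlow g t)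
      (integrableOn_heatFlowDeriv g) (tendsto_heatFlow_atTop g), heatFlow_zero]
  ring

end HeatFlow

/-- pointwise heat-kernel representation. -/
theorem stmt8 (n : ℕ) (f : (Fin n → Bool) → ℝ) (x : Fin n → Bool) :
    f x - (∑ ε : Fin n → Bool, f ε) / 2^n =
      ∫ t in Set.Ioi (0:ℝ),
        (Real.sqrt (Real.exp (2*t) - 1))⁻¹ *
          ∑ ξ : Fin n → Bool, w n t ξ *
            ∑ j : Fin n, del t (ξ j) * D j f (cmul x ξ) := by
  simp_rw [D_apply_cmul]
  convert heatFlow_representation (f ∘ cmul x) using 3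
  · simp [cmul_true]
  · exact (Equiv.sum_comp ((cmul_involutive x).toPerm _) f).symm

end
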